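/- arXiv:1511.07633 — 2 statements merged into one kernel-verified Lean document; each statement's English description precedes it below -/
import Mathlib

section
/- For every real number s ≥ 2, the largest real root γ_s of the polynomial Λ_s(t) = t³/6 − s(t − 1) satisfies √(6s) − 1 < γ_s < √(6s). -/
/-!
Write `a = √(6s)`, so that `Λ_s(t) = t (t² - a²) / 6 + s`. Hence `Λ_s(t) ≥ s > 0` for `t ≥ a`,
which bounds `γ_s` from above, while `Λ_s(a - 1) = a/2 - s - 1/6 < 0` because `a ≤ 2s`; the
intermediate value theorem then gives a root in `(a - 1, a)`, bounding `γ_s` from below.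
-/

open Set

noncomputable def Λ (s t : ℝ) : ℝ := t ^ 3 / 6 - s * (t - 1)

theorem continuous_Λ (s : ℝ) : Continuous (Λ s) := by
  unfold Λ
  fun_prop

theorem le_Λ_of_mul_le_sq {s t : ℝ} (ht : 0 ≤ t) (hst : 6 * s ≤ t ^ 2) : s ≤ Λ s t := by
  unfold Λ
  nlinarith [mul_nonneg ht (sub_nonneg.2 hst)]

theorem Λ_pos_of_sqrt_le {s t : ℝ} (hs : 0 < s) (ht : √(6 * s) ≤ t) : 0 < Λ s t := by
  obtain ⟨ht₀, hst⟩ := Real.sqrt_le_iff.mp ht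
  exact hs.trans_le (le_Λ_of_mul_le_sq ht₀ hst)

theorem Λ_sqrt {s : ℝ} (hs : 0 ≤ s) : Λ s √(6 * s) = s := by
  have ha : √(6 * s) ^ 2 = 6 * s := Real.sq_sqrt (by linarith)
  unfold Λ
  linear_combination √(6 * s) / 6 * ha

theorem Λ_sqrt_sub_one {s : ℝ} (hs : 0 ≤ s) : Λ s (√(6 * s) - 1) = √(6 * s) / 2 - s - 1 / 6 := by
  have ha : √(6 * s) ^ 2 = 6 * s := Real.sq_sqrt (by linarith)
  unfold Λ
  linear_combination (√(6 * s) - 3) / 6 * ha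

theorem sqrt_six_mul_le {s : ℝ} (hs : 3 / 2 ≤ s) : √(6 * s) ≤ 2 * s :=
  Real.sqrt_le_iff.mpr ⟨by linarith, by nlinarith⟩

theorem Λ_sqrt_sub_one_neg {s : ℝ} (hs : 3 / 2 ≤ s) : Λ s (√(6 * s) - 1) < 0 := by
  rw [Λ_sqrt_sub_one (by linarith)]
  linarith [sqrt_six_mul_le hs]

theorem exists_Λ_eq_zero_mem_Ioo {s : ℝ} (hs : 3 / 2 ≤ s) :
    ∃ x ∈ Ioo (√(6 * s) - 1) √(6 * s), Λ s x = 0 := by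
  have h0 : (0 : ℝ) ∈ Ioo (Λ s (√(6 * s) - 1)) (Λ s √(6 * s)) := by
    rw [Λ_sqrt (by linarith)]
    exact ⟨Λ_sqrt_sub_one_neg hs, by linarith⟩
  exact intermediate_value_Ioo (by linarith) (continuous_Λ s).continuousOn h0

/-- For s ≥ 2, the largest real root γ_s of Λ_s(t) = t³/6 − s(t−1) satisfies
√(6s) − 1 < γ_s < √(6s). -/
theorem stmt_5 (s : ℝ) (hs : 2 ≤ s) (γ : ℝ)
    (hγ : IsGreatest {t : ℝ | t ^ 3 / 6 - s * (t - 1) = 0} γ) :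
    Real.sqrt (6 * s) - 1 < γ ∧ γ < Real.sqrt (6 * s) := by
  obtain ⟨hγroot, hγmax⟩ := hγ
  obtain ⟨x, hx, hxroot⟩ := exists_Λ_eq_zero_mem_Ioo (s := s) (by linarith)
  refine ⟨hx.1.trans_le (hγmax hxroot), lt_of_not_ge fun hle => ?_⟩
  exact (Λ_pos_of_sqrt_le (by linarith) hle).ne' hγroot
end

section
/- Fix d ∈ ℕ and let (p_m) be a sequence of real polynomial functions, each of degree at most d, converging pointwise on ℝ to a function f. Then f is a polynomial function of degree at most d, and the derivatives p_m' converge pointwise on ℝ to f'. -/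
open Filter Polynomial Finset Topology

namespace Lagrange

variable {F ι : Type*} [Field F] [DecidableEq ι]

theorem map_interpolate (L : F[X] →ₗ[F] F) (s : Finset ι) (v : ι → F) (r : ι → F) :
    L (interpolate s v r) = ∑ i ∈ s, r i * L (Lagrange.basis s v i) := by
  simp only [interpolate_apply, map_sum, ← smul_eq_C_mul, map_smul, smul_eq_mul]

/-- A polynomial of degree `< #s` is the interpolant of its values on the nodes, so a linear
functional of it is a fixed linear combination of these values; convergence at the nodes
therefore propagates to every linear functional. -/
theorem tendsto_map_of_tendsto_eval [TopologicalSpace F] [ContinuousAdd F] [ContinuousMul F]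
    {α : Type*} {l : Filter α} {s : Finset ι} {v : ι → F} (hvs : Set.InjOn v s)
    (L : F[X] →ₗ[F] F) {p : α → F[X]} (hdeg : ∀ a, (p a).degree < #s) {r : ι → F}
    (hr : ∀ i ∈ s, Tendsto (fun a => (p a).eval (v i)) l (𝓝 (r i))) :
    Tendsto (fun a => L (p a)) l (𝓝 (L (interpolate s v r))) := by
  have hp : ∀ a, L (p a) = ∑ i ∈ s, (p a).eval (v i) * L (Lagrange.basis s v i) := fun a => by
    conv_lhs => rw [eq_interpolate hvs (hdeg a)]
    exact map_interpolate L s v _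
  simp only [hp, map_interpolate]
  exact tendsto_finsetSum _ fun i hi => (hr i hi).mul_const _

end Lagrange

/-- A pointwise limit of real polynomial functions of degree ≤ d is a polynomial
function of degree ≤ d, and the derivatives converge pointwise to the
derivative of the limit. -/
theorem stmt_14 (d : ℕ) (p : ℕ → Polynomial ℝ)
    (hdeg : ∀ m, (p m).degree ≤ d) (f : ℝ → ℝ)
    (hconv : ∀ x : ℝ, Tendsto (fun m => (p m).eval x) atTop (nhds (f x))) :
    (∃ q : Polynomial ℝ, q.degree ≤ d ∧ ∀ x : ℝ, f x = q.eval x) ∧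
    ∀ x : ℝ, Tendsto (fun m => ((p m).derivative).eval x) atTop
      (nhds (deriv f x)) := by
  have hvs : Set.InjOn (Nat.cast : ℕ → ℝ) (range (d + 1)) := Nat.cast_injective.injOn
  have hdeg_lt : ∀ m, (p m).degree < #(range (d + 1)) := fun m => by
    rw [card_range]
    exact (hdeg m).trans_lt (by exact_mod_cast d.lt_succ_self)
  set q := Lagrange.interpolate (range (d + 1)) Nat.cast fun i : ℕ => f i
  have hlim : ∀ L : ℝ[X] →ₗ[ℝ] ℝ, Tendsto (fun m => L (p m)) atTop (𝓝 (L q)) := fun L =>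
    Lagrange.tendsto_map_of_tendsto_eval hvs L hdeg_lt fun i _ => hconv i
  have hfq : ∀ x, f x = q.eval x := fun x => tendsto_nhds_unique (hconv x) (hlim (leval x))
  have hqdeg : q.degree ≤ d := by
    have := Lagrange.degree_interpolate_lt (fun i : ℕ => f i) hvs
    rw [card_range] at this
    exact Order.lt_succ_iff.mp (by exact_mod_cast this)
  refine ⟨⟨q, hqdeg, hfq⟩, fun x => ?_⟩
  rw [show f = fun y => q.eval y from funext hfq, Polynomial.deriv]
  exact hlim ((leval x).comp derivative)
end
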